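/- Let A_0, …, A_s ∈ M_m(K[t]), b ∈ K[t]^m, ν ∈ ℕ, and assume the system (REC') is t-head regular, i.e. with ℓ := max_j deg_t A_j and A_{jℓ} the coefficient matrix of t^ℓ in A_j, the polynomial ρ(x) := det(Σ_{j=0}^s A_{jℓ} x^j) is not the zero polynomial. If y ∈ K[t]^m is a nonzero polynomial solution of A_s·σ^s(y) + … + A_0·y = t^{−ν}·b of degree n (the maximum of the degrees of the entries of y), then either b ≠ 0 and ℓ + n + ν ≤ deg b, or ρ(q^n) = 0. -/

import Mathlib

/-!
Compare the coefficients of `t^(ℓ + n + ν)` on both sides of the cleared equation. Since `σ^j`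
multiplies the coefficient of `tⁿ` by `q^(jn)` and no entry of `A_j` has degree above `ℓ`, the
left-hand side contributes exactly `(∑_j q^(nj) A_{jℓ}) v`, where `v ≠ 0` is the vector of
coefficients of `tⁿ` in `y`. The determinant of this matrix is `ρ(qⁿ)`; if it is nonzero, the
vector is nonzero, so some entry of `b` has a nonzero coefficient of `t^(ℓ + n + ν)`.
-/

open Polynomial Finset
open scoped Matrix

section Polynomial

variable {R ι κ : Type*}

theorem natDegree_comp_C_mul_X_le [Semiring R] (p : R[X]) (r : R) :
    (p.comp (C r * X)).natDegree ≤ p.natDegree :=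
  natDegree_le_iff_coeff_eq_zero.mpr fun k hk => by
    rw [comp_C_mul_X_coeff, coeff_eq_zero_of_natDegree_lt hk, zero_mul]

theorem coeff_sup_natDegree_ne_zero [Semiring R] [Fintype ι] {y : ι → R[X]} (hy : y ≠ 0) :
    (fun i => (y i).coeff (univ.sup fun i => (y i).natDegree)) ≠ 0 := by
  classical
  obtain ⟨i₀, hi₀⟩ := Function.ne_iff.mp hy
  obtain ⟨i₁, hi₁, hmax⟩ := (univ.filter (y · ≠ 0)).exists_max_image
    (fun i => (y i).natDegree) ⟨i₀, by simpa using hi₀⟩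
  have hy₁ : y i₁ ≠ 0 := (mem_filter.mp hi₁).2
  have hsup : (univ.sup fun i => (y i).natDegree) = (y i₁).natDegree := by
    refine le_antisymm (Finset.sup_le fun i _ => ?_) (le_sup (f := fun i => (y i).natDegree)
      (mem_univ i₁))
    by_cases h : y i = 0
    · simp [h]
    · exact hmax i (by simpa using h)
  exact Function.ne_iff.mpr ⟨i₁, by simpa [hsup] using hy₁⟩

theorem ne_zero_and_le_sup_natDegree_of_coeff_ne_zero [Semiring R] [Fintype ι]
    {b : ι → R[X]} {d : ℕ} (h : (fun i => (b i).coeff d) ≠ 0) :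
    b ≠ 0 ∧ d ≤ univ.sup fun i => (b i).natDegree := by
  obtain ⟨i, hi⟩ := Function.ne_iff.mp h
  refine ⟨fun hb => hi (by simp [hb]), ?_⟩
  exact (le_natDegree_of_ne_zero hi).trans (le_sup (f := fun i => (b i).natDegree) (mem_univ i))

theorem coeff_mulVec_add_of_natDegree_le [Semiring R] [Fintype κ] {A : Matrix ι κ R[X]}
    {z : κ → R[X]} {ℓ n : ℕ} (hA : ∀ i k, (A i k).natDegree ≤ ℓ)
    (hz : ∀ k, (z k).natDegree ≤ n) (i : ι) :
    ((A *ᵥ z) i).coeff (ℓ + n) = (A.map (coeff · ℓ) *ᵥ fun k => (z k).coeff n) i := by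
  simp only [Matrix.mulVec, dotProduct, finsetSum_coeff, Matrix.map_apply,
    coeff_mul_add_eq_of_natDegree_le (hA i _) (hz _)]

theorem coeff_sum_mulVec_comp_C_pow_mul_X [CommSemiring R] [Fintype κ]
    (A : ℕ → Matrix ι κ R[X]) (S : Finset ℕ) (r : R) {y : κ → R[X]} {ℓ n : ℕ}
    (hA : ∀ j ∈ S, ∀ i k, (A j i k).natDegree ≤ ℓ) (hy : ∀ k, (y k).natDegree ≤ n)
    (i : ι) :
    ((∑ j ∈ S, A j *ᵥ fun k => (y k).comp (C (r ^ j) * X)) i).coeff (ℓ + n) =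
      ((∑ j ∈ S, (r ^ n) ^ j • (A j).map (coeff · ℓ)) *ᵥ fun k => (y k).coeff n) i := by
  rw [Finset.sum_apply, finsetSum_coeff, Matrix.sum_mulVec, Finset.sum_apply]
  refine sum_congr rfl fun j hj => ?_
  rw [coeff_mulVec_add_of_natDegree_le (hA j hj)
    fun k => (natDegree_comp_C_mul_X_le _ _).trans (hy k)]
  rw [Matrix.smul_mulVec, ← Matrix.mulVec_smul]
  congr 2
  funext k
  rw [comp_C_mul_X_coeff, Pi.smul_apply, smul_eq_mul, pow_right_comm, mul_comm]

theorem eval_det_sum_X_pow_smul_map_C [CommRing R] [Fintype ι] [DecidableEq ι]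
    (N : ℕ → Matrix ι ι R) (S : Finset ℕ) (x : R) :
    (∑ j ∈ S, (X : R[X]) ^ j • (N j).map C).det.eval x = (∑ j ∈ S, x ^ j • N j).det := by
  rw [← coe_evalRingHom, RingHom.map_det]
  congr 1
  ext i k
  simp only [Matrix.map_apply, Matrix.sum_apply, Matrix.smul_apply, smul_eq_mul, eval_finsetSum,
    eval_mul, eval_pow, eval_X, eval_C, coe_evalRingHom, RingHom.mapMatrix_apply]

end Polynomial

theorem degree_bound_polynomial_solutions_general
    (K : Type*) [Field K]
    (q : K)
    (m s ν : ℕ)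
    (A : ℕ → Matrix (Fin m) (Fin m) K[X]) (b : Fin m → K[X])
    (ℓ : ℕ)
    (hℓ : ℓ = Finset.sup (Finset.range (s + 1)) fun j =>
      Finset.sup Finset.univ fun ik : Fin m × Fin m => (A j ik.1 ik.2).natDegree)
    (rho : K[X])
    (hrho : rho = Matrix.det (∑ j ∈ Finset.range (s + 1),
      (X : K[X]) ^ j • ((A j).map fun p => Polynomial.C (p.coeff ℓ))))
    (y : Fin m → K[X]) (hy : y ≠ 0)
    (n : ℕ) (hn : n = Finset.univ.sup fun i => (y i).natDegree)
    (hsol : (X : K[X]) ^ ν • (∑ j ∈ Finset.range (s + 1),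
        (A j).mulVec fun i => (y i).comp (Polynomial.C (q ^ j) * X)) = b) :
    (b ≠ 0 ∧ ℓ + n + ν ≤ Finset.univ.sup fun i => (b i).natDegree)
      ∨ rho.eval (q ^ n) = 0 := by
  set M : Matrix (Fin m) (Fin m) K :=
    ∑ j ∈ range (s + 1), (q ^ n) ^ j • (A j).map (coeff · ℓ)
  have hdeg_A : ∀ j ∈ range (s + 1), ∀ i k, (A j i k).natDegree ≤ ℓ := fun j hj i k =>
    Finset.sup_le_iff.mp (Finset.sup_le_iff.mp hℓ.ge j hj) (i, k) (mem_univ _)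
  have hdeg_y : ∀ k, (y k).natDegree ≤ n := fun k => Finset.sup_le_iff.mp hn.ge k (mem_univ k)
  have hb : (fun i => (b i).coeff (ℓ + n + ν)) = M *ᵥ fun k => (y k).coeff n := by
    funext i
    rw [← hsol, Pi.smul_apply, smul_eq_mul, coeff_X_pow_mul,
      coeff_sum_mulVec_comp_C_pow_mul_X A _ q hdeg_A hdeg_y]
  have hdet : rho.eval (q ^ n) = M.det := hrho ▸ eval_det_sum_X_pow_smul_map_C _ _ _
  rw [or_iff_not_imp_right, hdet]
  intro hM
  refine ne_zero_and_le_sup_natDegree_of_coeff_ne_zero ?_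
  rw [hb]
  exact fun hMv => hM <| Matrix.exists_mulVec_eq_zero_iff.mp
    ⟨_, hn ▸ coeff_sup_natDegree_ne_zero hy, hMv⟩

/-- **Degree bound for polynomial solutions** (Theorem `thm:deg`).
`σ(y)(t) = y(q·t)`, realised on polynomials by `p ↦ p.comp (C q * X)`; the equation
`A_s σ^s(y) + ⋯ + A_0 y = t^{-ν} b` is stated in the equivalent, denominator-cleared form
`t^ν · (A_s σ^s(y) + ⋯ + A_0 y) = b`.  If the system is `t`-head regular (`ρ ≠ 0`) and
`y` is a nonzero polynomial solution of degree `n`, then either `b ≠ 0` and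
`ℓ + n + ν ≤ deg b`, or `ρ(qⁿ) = 0`. -/
theorem degree_bound_polynomial_solutions
    (K : Type*) [Field K] [CharZero K]
    (q : K) (hq0 : q ≠ 0) (hqru : ∀ k : ℕ, 0 < k → q ^ k ≠ 1)
    (m s ν : ℕ)
    (A : ℕ → Matrix (Fin m) (Fin m) K[X]) (b : Fin m → K[X])
    (ℓ : ℕ)
    (hℓ : ℓ = Finset.sup (Finset.range (s + 1)) fun j =>
      Finset.sup Finset.univ fun ik : Fin m × Fin m => (A j ik.1 ik.2).natDegree)
    (rho : K[X])
    (hrho : rho = Matrix.det (∑ j ∈ Finset.range (s + 1),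
      (X : K[X]) ^ j • ((A j).map fun p => Polynomial.C (p.coeff ℓ))))
    (hreg : rho ≠ 0)
    (y : Fin m → K[X]) (hy : y ≠ 0)
    (n : ℕ) (hn : n = Finset.univ.sup fun i => (y i).natDegree)
    (hsol : (X : K[X]) ^ ν • (∑ j ∈ Finset.range (s + 1),
        (A j).mulVec fun i => (y i).comp (Polynomial.C (q ^ j) * X)) = b) :
    (b ≠ 0 ∧ ℓ + n + ν ≤ Finset.univ.sup fun i => (b i).natDegree)
      ∨ rho.eval (q ^ n) = 0 :=
  degree_bound_polynomial_solutions_general K q m s ν A b ℓ hℓ rho hrho y hy n hn hsol
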